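/- Let s ∈ ℝ, p ∈ (0,∞), q ∈ (0,∞), and τ ∈ (1/p, ∞). Define ‖t‖_{ḃ^{s,τ}_{p,q}} via the Besov-type sequence norm and ‖t‖_{ḟ^{s,τ}_{p,q}} via the Triebel-Lizorkin-type sequence norm. Then both norms are equivalent to each other (both being equivalent to ‖t‖_{ḃ^{s+n(τ-1/p)}_{∞,∞}} = sup_Q |Q|^{-s/n-(τ-1/p)-1/2}|t_Q|); in particular ḟ^{s,τ}_{p,q}(ℝⁿ) = ḃ^{s,τ}_{p,q}(ℝⁿ) with equivalent norms when τ > 1/p. -/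

import Mathlib

/-!
Let `M = sup_Q |Q|^{-s/n-(τ-1/p)-1/2} |t_Q|`, so that every term obeys
`|Q|^{-s/n-1/2} |t_Q| ≤ M |Q|^{τ-1/p} = M 2^{-j_Q n(τ-1/p)}`. A point of a dyadic cube `P` lies in
exactly one dyadic subcube of `P` of each generation `j ≥ j_P`, so for `x ∈ P` both inner sums
are dominated by the geometric series `(Σ_{j ≥ j_P} (M 2^{-jn(τ-1/p)})^q)^{1/q}`, which converges
because `τ > 1/p` and is a constant times `M |P|^{τ-1/p}`; integrating over `P` and multiplying by
`|P|^{-τ}` bounds both norms by a constant times `M`. Conversely, keeping only the term `Q = P`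
in the supremum over `P` shows that both norms dominate `M`.
-/

open MeasureTheory ENNReal

/-- A dyadic cube `Q_{jk} = 2^{-j}([0,1)^n + k)` in `ℝⁿ`, recorded by its
generation `j ∈ ℤ` and position `k ∈ ℤⁿ`. -/
structure DyadicCube (n : ℕ) where
  j : ℤ
  k : Fin n → ℤ

namespace DyadicCube

/-- The dyadic cube as a subset of `ℝⁿ`. -/
def toSet {n : ℕ} (Q : DyadicCube n) : Set (Fin n → ℝ) :=
  {x | ∀ i, (Q.k i : ℝ) * (2 : ℝ) ^ (-Q.j) ≤ x i ∧
        x i < ((Q.k i : ℝ) + 1) * (2 : ℝ) ^ (-Q.j)}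

/-- The Lebesgue measure `|Q| = 2^{-jn}` of a dyadic cube, as an element of `ℝ≥0∞`. -/
noncomputable def vol {n : ℕ} (Q : DyadicCube n) : ℝ≥0∞ :=
  (2 : ℝ≥0∞) ^ (-(Q.j : ℝ) * n)

/-- The characteristic function `χ_Q`, with values in `ℝ≥0∞`. -/
noncomputable def ind {n : ℕ} (Q : DyadicCube n) (x : Fin n → ℝ) : ℝ≥0∞ :=
  Q.toSet.indicator (fun _ => (1 : ℝ≥0∞)) x

end DyadicCube

open DyadicCube

/-- The coefficient `|Q|^{-s/n - 1/2}`. -/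
noncomputable def coeff {n : ℕ} (s : ℝ) (Q : DyadicCube n) : ℝ≥0∞ :=
  Q.vol ^ (-(s / (n : ℝ)) - 1 / 2)

/-- The `ℓ^q`-norm `(Σ_i a_i^q)^{1/q}` of a family of extended nonnegative reals,
with the usual modification (`sup`) when `q = ∞`. -/
noncomputable def lqSum {ι : Type*} (q : ℝ≥0∞) (a : ι → ℝ≥0∞) : ℝ≥0∞ :=
  if q = ∞ then ⨆ i, a i else (∑' i, a i ^ q.toReal) ^ (1 / q.toReal)

/-- The `L^p`-norm `(∫_A g^p dx)^{1/p}` over a set `A ⊆ ℝⁿ`, with the usual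
modification (`sup` over `x ∈ A`) when `p = ∞`. -/
noncomputable def lpIntOn {n : ℕ} (p : ℝ≥0∞) (A : Set (Fin n → ℝ))
    (g : (Fin n → ℝ) → ℝ≥0∞) : ℝ≥0∞ :=
  if p = ∞ then ⨆ x ∈ A, g x
  else (∫⁻ x in A, g x ^ p.toReal) ^ (1 / p.toReal)

/-- The Triebel–Lizorkin-type sequence norm
`‖t‖_{ḟ^{s,τ}_{p,q}} = sup_P |P|^{-τ} ( ∫_P ( Σ_{Q ⊆ P} [|Q|^{-s/n-1/2} |t_Q| χ_Q(x)]^q )^{p/q} dx )^{1/p}`,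
with the usual modifications when `p = ∞` or `q = ∞`. -/
noncomputable def fNorm (n : ℕ) (s τ : ℝ) (p q : ℝ≥0∞) (t : DyadicCube n → ℂ) : ℝ≥0∞ :=
  ⨆ P : DyadicCube n, P.vol ^ (-τ) *
    lpIntOn p P.toSet fun x =>
      lqSum q fun Q : {Q : DyadicCube n // Q.toSet ⊆ P.toSet} =>
        coeff s Q.1 * ‖t Q.1‖₊ * ind Q.1 x

/-- The Besov-type sequence norm
`‖t‖_{ḃ^{s,τ}_{p,q}} = sup_P |P|^{-τ} ( Σ_{j ≥ j_P} ( ∫_P [ Σ_{Q ⊆ P, ℓ(Q)=2^{-j}} |Q|^{-s/n-1/2} |t_Q| χ_Q(x) ]^p dx )^{q/p} )^{1/q}`,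
with the usual modifications when `p = ∞` or `q = ∞`. -/
noncomputable def bNorm (n : ℕ) (s τ : ℝ) (p q : ℝ≥0∞) (t : DyadicCube n → ℂ) : ℝ≥0∞ :=
  ⨆ P : DyadicCube n, P.vol ^ (-τ) *
    lqSum q fun j : {j : ℤ // P.j ≤ j} =>
      lpIntOn p P.toSet fun x =>
        ∑' Q : {Q : DyadicCube n // Q.toSet ⊆ P.toSet ∧ Q.j = j.1},
          coeff s Q.1 * ‖t Q.1‖₊ * ind Q.1 x

/-- The `ḟ^{σ}_{∞,∞} = ḃ^{σ}_{∞,∞}` sequence norm `sup_Q |Q|^{-σ/n - 1/2} |t_Q|`. -/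
noncomputable def supNorm (n : ℕ) (σ : ℝ) (t : DyadicCube n → ℂ) : ℝ≥0∞ :=
  ⨆ Q : DyadicCube n, coeff σ Q * ‖t Q‖₊

/-- The test sequence with `t_{R_j} = |R_j|^{s/n + 1/2 + τ - 1/p}` for
`R_j = [0,2^{-j})^n` (the dyadic cube with `k = 0`), and `t_Q = 0` otherwise. -/
noncomputable def testSeq (n : ℕ) (s τ p : ℝ) : DyadicCube n → ℂ := fun Q =>
  if Q.k = 0 then
    ((((2 : ℝ) ^ (-(Q.j : ℝ) * n)) ^ (s / n + 1 / 2 + τ - 1 / p) : ℝ) : ℂ)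
  else 0

/-- The cube `R_j = [0, 2^{-j})^n`. -/
def Rcube (n : ℕ) (j : ℤ) : DyadicCube n := ⟨j, 0⟩

namespace DyadicCube

variable {n : ℕ}

lemma vol_ne_zero (Q : DyadicCube n) : Q.vol ≠ 0 := by
  simp [vol, ENNReal.rpow_eq_zero_iff]

lemma vol_ne_top (Q : DyadicCube n) : Q.vol ≠ ∞ := by
  simp [vol, ENNReal.rpow_eq_top_iff]

lemma vol_rpow_add (Q : DyadicCube n) (a b : ℝ) :
    Q.vol ^ (a + b) = Q.vol ^ a * Q.vol ^ b :=
  ENNReal.rpow_add _ _ Q.vol_ne_zero Q.vol_ne_top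

lemma vol_rpow (Q : DyadicCube n) (b : ℝ) :
    Q.vol ^ b = (2 : ℝ≥0∞) ^ (-(Q.j : ℝ) * (n * b)) := by
  rw [vol, ← ENNReal.rpow_mul]; ring_nf

lemma vol_rpow_neg_mul_rpow_mul_rpow (Q : DyadicCube n) (τ a : ℝ) :
    Q.vol ^ (-τ) * (Q.vol ^ (τ - a) * Q.vol ^ a) = 1 := by
  rw [← vol_rpow_add, ← vol_rpow_add, show -τ + (τ - a + a) = 0 by ring, ENNReal.rpow_zero]

lemma toSet_eq_pi (Q : DyadicCube n) :
    Q.toSet = Set.univ.pi fun i =>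
      Set.Ico ((Q.k i : ℝ) * (2 : ℝ) ^ (-Q.j)) ((Q.k i + 1) * (2 : ℝ) ^ (-Q.j)) := by
  ext x; simp [toSet]

lemma measurableSet_toSet (Q : DyadicCube n) : MeasurableSet Q.toSet := by
  rw [toSet_eq_pi]; exact .univ_pi fun _ => measurableSet_Ico

lemma volume_toSet (Q : DyadicCube n) : volume Q.toSet = Q.vol := by
  have hside : ∀ i, volume (Set.Ico ((Q.k i : ℝ) * (2 : ℝ) ^ (-Q.j))
      ((Q.k i + 1) * (2 : ℝ) ^ (-Q.j))) = ENNReal.ofReal ((2 : ℝ) ^ (-Q.j)) := fun i => by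
    rw [Real.volume_Ico]; ring_nf
  rw [toSet_eq_pi, volume_pi_pi, Finset.prod_congr rfl fun i _ => hside i, Finset.prod_const,
    Finset.card_univ, Fintype.card_fin, ← ENNReal.ofReal_pow (by positivity),
    ← Real.rpow_intCast, ← Real.rpow_natCast, ← Real.rpow_mul (by norm_num),
    ← ENNReal.ofReal_rpow_of_pos (by norm_num), vol]
  norm_num

lemma j_le_of_toSet_subset (hn : 0 < n) {P Q : DyadicCube n} (h : Q.toSet ⊆ P.toSet) :
    P.j ≤ Q.j := by
  by_contra! hlt
  have hvol : P.vol < Q.vol := by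
    refine ENNReal.rpow_lt_rpow_of_exponent_lt (by norm_num) (by norm_num) ?_
    have : (Q.j : ℝ) < P.j := by exact_mod_cast hlt
    have : (0 : ℝ) < n := by exact_mod_cast hn
    nlinarith
  rw [← volume_toSet, ← volume_toSet] at hvol
  exact (measure_mono h).not_gt hvol

lemma k_eq_floor {Q : DyadicCube n} {x : Fin n → ℝ} (hx : x ∈ Q.toSet) (i : Fin n) :
    Q.k i = ⌊x i * (2 : ℝ) ^ Q.j⌋ := by
  have h2 : (0 : ℝ) < (2 : ℝ) ^ Q.j := by positivity
  obtain ⟨hlo, hhi⟩ := hx i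
  simp only [zpow_neg, ← div_eq_mul_inv] at hlo hhi
  rw [eq_comm, Int.floor_eq_iff]
  exact ⟨(div_le_iff₀ h2).mp hlo, (lt_div_iff₀ h2).mp hhi⟩

lemma eq_of_mem_of_j_eq {Q Q' : DyadicCube n} {x : Fin n → ℝ}
    (hx : x ∈ Q.toSet) (hx' : x ∈ Q'.toSet) (hj : Q.j = Q'.j) : Q = Q' := by
  obtain ⟨j, k⟩ := Q
  obtain ⟨j', k'⟩ := Q'
  obtain rfl : j = j' := hj
  congr
  funext i
  exact (k_eq_floor hx i).trans (k_eq_floor hx' i).symm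

lemma ind_of_mem {Q : DyadicCube n} {x : Fin n → ℝ} (hx : x ∈ Q.toSet) : Q.ind x = 1 :=
  Set.indicator_of_mem hx _

lemma ind_le_one (Q : DyadicCube n) (x : Fin n → ℝ) : Q.ind x ≤ 1 :=
  Set.indicator_le_self' (fun _ _ => zero_le_one) x

lemma mem_toSet_of_mul_ind_ne_zero {Q : DyadicCube n} {x : Fin n → ℝ} {c : ℝ≥0∞}
    (h : c * Q.ind x ≠ 0) : x ∈ Q.toSet :=
  Set.mem_of_indicator_ne_zero (right_ne_zero_of_mul h)

end DyadicCube

lemma ENNReal.tsum_le_tsum_of_injOn_support {ι κ : Type*} {f : ι → ℝ≥0∞} {g : κ → ℝ≥0∞}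
    (e : ι → κ) (he : Set.InjOn e (Function.support f)) (hfg : ∀ i, f i ≤ g (e i)) :
    ∑' i, f i ≤ ∑' k, g k := by
  rw [← tsum_subtype_support f]
  calc ∑' i : Function.support f, f i ≤ ∑' i : Function.support f, g (e i) :=
        ENNReal.tsum_le_tsum fun i => hfg i
    _ ≤ ∑' k, g k := ENNReal.tsum_comp_le_tsum_of_injective (Set.injOn_iff_injective.mp he) g

lemma ENNReal.tsum_le_of_subsingleton_support {ι : Type*} {f : ι → ℝ≥0∞} {B : ℝ≥0∞}
    (hf : (Function.support f).Subsingleton) (hB : ∀ i, f i ≤ B) : ∑' i, f i ≤ B := by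
  simpa using ENNReal.tsum_le_tsum_of_injOn_support (g := fun _ : Unit => B) (fun _ => ())
    (hf.injOn _) hB

lemma lqSum_ofReal {ι : Type*} {q : ℝ} (hq : 0 < q) (a : ι → ℝ≥0∞) :
    lqSum (ENNReal.ofReal q) a = (∑' i, a i ^ q) ^ (1 / q) := by
  rw [lqSum, if_neg ENNReal.ofReal_ne_top, ENNReal.toReal_ofReal hq.le]

lemma le_lqSum {ι : Type*} {q : ℝ} (hq : 0 < q) (a : ι → ℝ≥0∞) (i : ι) :
    a i ≤ lqSum (ENNReal.ofReal q) a := by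
  rw [lqSum_ofReal hq]
  calc a i = (a i ^ q) ^ (1 / q) := by rw [one_div, ENNReal.rpow_rpow_inv hq.ne']
    _ ≤ (∑' i, a i ^ q) ^ (1 / q) := by gcongr; exact ENNReal.le_tsum i

lemma lqSum_le_lqSum_of_injOn_support {ι κ : Type*} {q : ℝ} (hq : 0 < q)
    {a : ι → ℝ≥0∞} {b : κ → ℝ≥0∞} (e : ι → κ) (he : Set.InjOn e (Function.support a))
    (hab : ∀ i, a i ≤ b (e i)) :
    lqSum (ENNReal.ofReal q) a ≤ lqSum (ENNReal.ofReal q) b := by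
  have hsupp : Function.support (fun i => a i ^ q) ⊆ Function.support a := fun i hi h0 =>
    hi (by simp [h0, ENNReal.zero_rpow_of_pos hq])
  rw [lqSum_ofReal hq, lqSum_ofReal hq]
  gcongr
  exact ENNReal.tsum_le_tsum_of_injOn_support e (he.mono hsupp) fun i => by gcongr; exact hab i

lemma lqSum_mono {ι : Type*} {q : ℝ} (hq : 0 < q) {a b : ι → ℝ≥0∞} (hab : ∀ i, a i ≤ b i) :
    lqSum (ENNReal.ofReal q) a ≤ lqSum (ENNReal.ofReal q) b :=
  lqSum_le_lqSum_of_injOn_support hq id (Set.injOn_id _) hab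

lemma lpIntOn_ofReal {n : ℕ} {p : ℝ} (hp : 0 < p) (A : Set (Fin n → ℝ))
    (g : (Fin n → ℝ) → ℝ≥0∞) :
    lpIntOn (ENNReal.ofReal p) A g = (∫⁻ x in A, g x ^ p) ^ (1 / p) := by
  rw [lpIntOn, if_neg ENNReal.ofReal_ne_top, ENNReal.toReal_ofReal hp.le]

lemma lpIntOn_const {n : ℕ} {p : ℝ} (hp : 0 < p) (A : Set (Fin n → ℝ)) (B : ℝ≥0∞) :
    lpIntOn (ENNReal.ofReal p) A (fun _ => B) = B * volume A ^ (1 / p) := by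
  rw [lpIntOn_ofReal hp, setLIntegral_const, ENNReal.mul_rpow_of_nonneg _ _ (by positivity),
    one_div, ENNReal.rpow_rpow_inv hp.ne']

lemma lpIntOn_le_mul_volume_rpow {n : ℕ} {p : ℝ} (hp : 0 < p) (A : Set (Fin n → ℝ))
    {g : (Fin n → ℝ) → ℝ≥0∞} {B : ℝ≥0∞} (hg : ∀ x, g x ≤ B) :
    lpIntOn (ENNReal.ofReal p) A g ≤ B * volume A ^ (1 / p) := by
  rw [← lpIntOn_const hp, lpIntOn_ofReal hp, lpIntOn_ofReal hp]
  gcongr with x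
  exact hg x

lemma mul_volume_rpow_le_lpIntOn {n : ℕ} {p : ℝ} (hp : 0 < p) {A : Set (Fin n → ℝ)}
    (hA : MeasurableSet A) {g : (Fin n → ℝ) → ℝ≥0∞} {B : ℝ≥0∞} (hg : ∀ x ∈ A, B ≤ g x) :
    B * volume A ^ (1 / p) ≤ lpIntOn (ENNReal.ofReal p) A g := by
  rw [← lpIntOn_const hp, lpIntOn_ofReal hp, lpIntOn_ofReal hp]
  gcongr 1
  exact setLIntegral_mono' hA fun x hx => by gcongr; exact hg x hx

def natEquivIntGE (j₀ : ℤ) : ℕ ≃ {j : ℤ // j₀ ≤ j} where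
  toFun m := ⟨j₀ + m, by omega⟩
  invFun j := (j.1 - j₀).toNat
  left_inv m := by simp
  right_inv j := by ext; simp only; omega

lemma tsum_two_rpow_neg_mul_of_ge (j₀ : ℤ) (a : ℝ) :
    ∑' j : {j : ℤ // j₀ ≤ j}, (2 : ℝ≥0∞) ^ (-(j.1 : ℝ) * a) =
      (2 : ℝ≥0∞) ^ (-(j₀ : ℝ) * a) * (1 - (2 : ℝ≥0∞) ^ (-a))⁻¹ := by
  have hterm : ∀ m : ℕ, (2 : ℝ≥0∞) ^ (-((natEquivIntGE j₀ m).1 : ℝ) * a) =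
      (2 : ℝ≥0∞) ^ (-(j₀ : ℝ) * a) * ((2 : ℝ≥0∞) ^ (-a)) ^ m := fun m => by
    rw [← ENNReal.rpow_natCast, ← ENNReal.rpow_mul,
      ← ENNReal.rpow_add _ _ (by norm_num) (by norm_num)]
    simp only [natEquivIntGE, Equiv.coe_fn_mk, Int.cast_add, Int.cast_natCast]
    ring_nf
  rw [← (natEquivIntGE j₀).tsum_eq, tsum_congr hterm, ENNReal.tsum_mul_left,
    ENNReal.tsum_geometric]

/-- `(1 - 2^{-aq})^{-1/q}`, the `ℓ^q`-norm of `(2^{-ja})_{j ≥ 0}`. -/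
noncomputable def geomConst (a q : ℝ) : ℝ≥0∞ :=
  ((1 - (2 : ℝ≥0∞) ^ (-(a * q)))⁻¹) ^ (1 / q)

lemma one_le_geomConst {a q : ℝ} (hq : 0 < q) : 1 ≤ geomConst a q :=
  ENNReal.one_le_rpow (ENNReal.one_le_inv.mpr tsub_le_self) (by positivity)

lemma geomConst_ne_top {a q : ℝ} (ha : 0 < a) (hq : 0 < q) : geomConst a q ≠ ∞ := by
  have hlt : (2 : ℝ≥0∞) ^ (-(a * q)) < 1 :=
    ENNReal.rpow_lt_one_of_one_lt_of_neg (by norm_num) (by nlinarith)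
  refine ENNReal.rpow_ne_top_of_nonneg (by positivity) ?_
  simpa [ENNReal.inv_eq_top, tsub_eq_zero_iff_le] using hlt

lemma lqSum_geometric {q : ℝ} (hq : 0 < q) (j₀ : ℤ) (a : ℝ) (c : ℝ≥0∞) :
    lqSum (ENNReal.ofReal q) (fun j : {j : ℤ // j₀ ≤ j} => c * (2 : ℝ≥0∞) ^ (-(j.1 : ℝ) * a)) =
      c * (2 : ℝ≥0∞) ^ (-(j₀ : ℝ) * a) * geomConst a q := by
  have hpow : ∀ j : ℝ, (c * (2 : ℝ≥0∞) ^ (-j * a)) ^ q = c ^ q * (2 : ℝ≥0∞) ^ (-j * (a * q)) :=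
    fun j => by rw [ENNReal.mul_rpow_of_nonneg _ _ hq.le, ← ENNReal.rpow_mul]; ring_nf
  simp only [lqSum_ofReal hq, hpow]
  rw [ENNReal.tsum_mul_left, tsum_two_rpow_neg_mul_of_ge, ← mul_assoc, ← hpow, geomConst,
    ENNReal.mul_rpow_of_nonneg _ _ (by positivity), one_div, ENNReal.rpow_rpow_inv hq.ne']

section NormBounds

variable {n : ℕ} {s p q τ : ℝ}

lemma coeff_add_mul_vol_rpow (hn : 0 < n) (s ε : ℝ) (Q : DyadicCube n) :
    coeff (s + n * ε) Q * Q.vol ^ ε = coeff s Q := by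
  rw [coeff, coeff, ← vol_rpow_add]
  congr 1
  field_simp
  ring

lemma coeff_add_sub_eq (hn : 0 < n) (s τ a : ℝ) (Q : DyadicCube n) :
    coeff (s + n * (τ - a)) Q = Q.vol ^ (-τ) * (coeff s Q * Q.vol ^ a) := by
  rw [← coeff_add_mul_vol_rpow hn s (τ - a) Q, mul_assoc, mul_left_comm,
    vol_rpow_neg_mul_rpow_mul_rpow, mul_one]

lemma coeff_mul_nnnorm_mul_ind_le (hn : 0 < n) (t : DyadicCube n → ℂ) (ε : ℝ)
    (Q : DyadicCube n) (x : Fin n → ℝ) :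
    coeff s Q * ‖t Q‖₊ * Q.ind x ≤
      supNorm n (s + n * ε) t * (2 : ℝ≥0∞) ^ (-(Q.j : ℝ) * (n * ε)) := by
  calc coeff s Q * ‖t Q‖₊ * Q.ind x ≤ coeff (s + n * ε) Q * ‖t Q‖₊ * Q.vol ^ ε * 1 := by
        rw [mul_right_comm _ _ (Q.vol ^ ε), coeff_add_mul_vol_rpow hn]
        gcongr
        exact ind_le_one Q x
    _ ≤ supNorm n (s + n * ε) t * Q.vol ^ ε * 1 := by
        gcongr
        exact le_iSup (fun Q => coeff (s + n * ε) Q * (‖t Q‖₊ : ℝ≥0∞)) Q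
    _ = _ := by rw [mul_one, vol_rpow]

lemma supNorm_le_fNorm (hn : 0 < n) (hp : 0 < p) (hq : 0 < q) (t : DyadicCube n → ℂ) :
    supNorm n (s + n * (τ - 1 / p)) t ≤ fNorm n s τ (ENNReal.ofReal p) (ENNReal.ofReal q) t := by
  refine iSup_le fun Q => le_iSup_of_le Q ?_
  have hpt : ∀ x ∈ Q.toSet, coeff s Q * ‖t Q‖₊ ≤ lqSum (ENNReal.ofReal q)
      fun Q' : {Q' : DyadicCube n // Q'.toSet ⊆ Q.toSet} => coeff s Q'.1 * ‖t Q'.1‖₊ * ind Q'.1 x :=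
    fun x hx => by
      simpa [ind_of_mem hx] using le_lqSum hq (fun Q' : {Q' : DyadicCube n // Q'.toSet ⊆ Q.toSet} =>
        coeff s Q'.1 * ‖t Q'.1‖₊ * ind Q'.1 x) ⟨Q, subset_rfl⟩
  calc coeff (s + n * (τ - 1 / p)) Q * ‖t Q‖₊
      = Q.vol ^ (-τ) * (coeff s Q * ‖t Q‖₊ * volume Q.toSet ^ (1 / p)) := by
        rw [coeff_add_sub_eq hn, volume_toSet]; ring
    _ ≤ _ := by gcongr; exact mul_volume_rpow_le_lpIntOn hp Q.measurableSet_toSet hpt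

lemma supNorm_le_bNorm (hn : 0 < n) (hp : 0 < p) (hq : 0 < q) (t : DyadicCube n → ℂ) :
    supNorm n (s + n * (τ - 1 / p)) t ≤ bNorm n s τ (ENNReal.ofReal p) (ENNReal.ofReal q) t := by
  refine iSup_le fun Q => le_iSup_of_le Q ?_
  have hpt : ∀ x ∈ Q.toSet, coeff s Q * ‖t Q‖₊ ≤
      ∑' Q' : {Q' : DyadicCube n // Q'.toSet ⊆ Q.toSet ∧ Q'.j = Q.j},
        coeff s Q'.1 * ‖t Q'.1‖₊ * ind Q'.1 x :=
    fun x hx => by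
      simpa [ind_of_mem hx] using ENNReal.le_tsum (f := fun Q' :
        {Q' : DyadicCube n // Q'.toSet ⊆ Q.toSet ∧ Q'.j = Q.j} =>
          coeff s Q'.1 * ‖t Q'.1‖₊ * ind Q'.1 x) ⟨Q, subset_rfl, rfl⟩
  calc coeff (s + n * (τ - 1 / p)) Q * ‖t Q‖₊
      = Q.vol ^ (-τ) * (coeff s Q * ‖t Q‖₊ * volume Q.toSet ^ (1 / p)) := by
        rw [coeff_add_sub_eq hn, volume_toSet]; ring
    _ ≤ _ := by
        gcongr
        exact (mul_volume_rpow_le_lpIntOn hp Q.measurableSet_toSet hpt).trans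
          (le_lqSum hq _ (⟨Q.j, le_rfl⟩ : {j : ℤ // Q.j ≤ j}))

lemma fNorm_le_geomConst_mul_supNorm (hn : 0 < n) (hp : 0 < p) (hq : 0 < q)
    (t : DyadicCube n → ℂ) :
    fNorm n s τ (ENNReal.ofReal p) (ENNReal.ofReal q) t ≤
      geomConst (n * (τ - 1 / p)) q * supNorm n (s + n * (τ - 1 / p)) t := by
  set M := supNorm n (s + n * (τ - 1 / p)) t
  set K := geomConst (n * (τ - 1 / p)) q
  refine iSup_le fun P => ?_
  have hpt : ∀ x, lqSum (ENNReal.ofReal q) (fun Q : {Q : DyadicCube n // Q.toSet ⊆ P.toSet} =>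
      coeff s Q.1 * ‖t Q.1‖₊ * ind Q.1 x) ≤ M * P.vol ^ (τ - 1 / p) * K := fun x => by
    rw [vol_rpow, ← lqSum_geometric hq]
    refine lqSum_le_lqSum_of_injOn_support hq (fun Q => ⟨Q.1.j, j_le_of_toSet_subset hn Q.2⟩)
      ?_ fun Q => coeff_mul_nnnorm_mul_ind_le hn t _ Q.1 x
    intro Q hQ Q' hQ' hj
    exact Subtype.ext (eq_of_mem_of_j_eq (mem_toSet_of_mul_ind_ne_zero hQ)
      (mem_toSet_of_mul_ind_ne_zero hQ') (congrArg Subtype.val hj))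
  calc P.vol ^ (-τ) * lpIntOn (ENNReal.ofReal p) P.toSet _
      ≤ P.vol ^ (-τ) * (M * P.vol ^ (τ - 1 / p) * K * volume P.toSet ^ (1 / p)) := by
        gcongr; exact lpIntOn_le_mul_volume_rpow hp _ hpt
    _ = K * M * (P.vol ^ (-τ) * (P.vol ^ (τ - 1 / p) * P.vol ^ (1 / p))) := by
        rw [volume_toSet]; ring
    _ = K * M := by rw [vol_rpow_neg_mul_rpow_mul_rpow, mul_one]

lemma bNorm_le_geomConst_mul_supNorm (hn : 0 < n) (hp : 0 < p) (hq : 0 < q)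
    (t : DyadicCube n → ℂ) :
    bNorm n s τ (ENNReal.ofReal p) (ENNReal.ofReal q) t ≤
      geomConst (n * (τ - 1 / p)) q * supNorm n (s + n * (τ - 1 / p)) t := by
  set M := supNorm n (s + n * (τ - 1 / p)) t
  set K := geomConst (n * (τ - 1 / p)) q
  refine iSup_le fun P => ?_
  have hlevel : ∀ j : {j : ℤ // P.j ≤ j}, lpIntOn (ENNReal.ofReal p) P.toSet (fun x =>
      ∑' Q : {Q : DyadicCube n // Q.toSet ⊆ P.toSet ∧ Q.j = j.1},
        coeff s Q.1 * ‖t Q.1‖₊ * ind Q.1 x) ≤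
      M * volume P.toSet ^ (1 / p) * (2 : ℝ≥0∞) ^ (-(j.1 : ℝ) * (n * (τ - 1 / p))) := fun j => by
    rw [mul_right_comm]
    refine lpIntOn_le_mul_volume_rpow hp _ fun x =>
      ENNReal.tsum_le_of_subsingleton_support ?_ fun Q => ?_
    · intro Q hQ Q' hQ'
      exact Subtype.ext (eq_of_mem_of_j_eq (mem_toSet_of_mul_ind_ne_zero hQ)
        (mem_toSet_of_mul_ind_ne_zero hQ') (Q.2.2.trans Q'.2.2.symm))
    · exact (coeff_mul_nnnorm_mul_ind_le hn t _ Q.1 x).trans_eq (by rw [Q.2.2])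
  calc P.vol ^ (-τ) * lqSum (ENNReal.ofReal q) _
      ≤ P.vol ^ (-τ) * (M * volume P.toSet ^ (1 / p) *
          (2 : ℝ≥0∞) ^ (-(P.j : ℝ) * (n * (τ - 1 / p))) * K) := by
        gcongr; exact (lqSum_mono hq hlevel).trans_eq (lqSum_geometric hq _ _ _)
    _ = K * M * (P.vol ^ (-τ) * (P.vol ^ (τ - 1 / p) * P.vol ^ (1 / p))) := by
        rw [volume_toSet, ← vol_rpow]; ring
    _ = K * M := by rw [vol_rpow_neg_mul_rpow_mul_rpow, mul_one]

end NormBounds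

/-- for `s ∈ ℝ`, `p, q ∈ (0,∞)` and `τ ∈ (1/p,∞)`, the norms
`‖·‖_{ḟ^{s,τ}_{p,q}}` and `‖·‖_{ḃ^{s,τ}_{p,q}}` are equivalent to each other, both
being equivalent to `‖·‖_{ḃ^{s+n(τ-1/p)}_{∞,∞}} = sup_Q |Q|^{-s/n-(τ-1/p)-1/2}|t_Q|`;
in particular `ḟ^{s,τ}_{p,q} = ḃ^{s,τ}_{p,q}` with equivalent norms. -/
theorem stmt8 (n : ℕ) (hn : 0 < n) (s p q τ : ℝ)
    (hp : 0 < p) (hq : 0 < q) (hτ : 1 / p < τ) :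
    ∃ c C : ℝ≥0∞, 0 < c ∧ C ≠ ∞ ∧ ∀ t : DyadicCube n → ℂ,
      (c * bNorm n s τ (ENNReal.ofReal p) (ENNReal.ofReal q) t ≤
          fNorm n s τ (ENNReal.ofReal p) (ENNReal.ofReal q) t ∧
        fNorm n s τ (ENNReal.ofReal p) (ENNReal.ofReal q) t ≤
          C * bNorm n s τ (ENNReal.ofReal p) (ENNReal.ofReal q) t) ∧
      (c * supNorm n (s + n * (τ - 1 / p)) t ≤
          fNorm n s τ (ENNReal.ofReal p) (ENNReal.ofReal q) t ∧
        fNorm n s τ (ENNReal.ofReal p) (ENNReal.ofReal q) t ≤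
          C * supNorm n (s + n * (τ - 1 / p)) t) ∧
      (c * supNorm n (s + n * (τ - 1 / p)) t ≤
          bNorm n s τ (ENNReal.ofReal p) (ENNReal.ofReal q) t ∧
        bNorm n s τ (ENNReal.ofReal p) (ENNReal.ofReal q) t ≤
          C * supNorm n (s + n * (τ - 1 / p)) t) := by
  set K := geomConst (n * (τ - 1 / p)) q
  have hK : 1 ≤ K := one_le_geomConst hq
  have hK_ne_top : K ≠ ∞ := geomConst_ne_top (mul_pos (by exact_mod_cast hn) (by linarith)) hq
  refine ⟨K⁻¹, K, ENNReal.inv_pos.mpr hK_ne_top, hK_ne_top, fun t => ?_⟩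
  have hSF := supNorm_le_fNorm (s := s) (τ := τ) hn hp hq t
  have hSB := supNorm_le_bNorm (s := s) (τ := τ) hn hp hq t
  have hFS := fNorm_le_geomConst_mul_supNorm (s := s) (τ := τ) hn hp hq t
  have hBS := bNorm_le_geomConst_mul_supNorm (s := s) (τ := τ) hn hp hq t
  simp only [ENNReal.inv_mul_le_iff (zero_lt_one.trans_le hK).ne' hK_ne_top]
  exact ⟨⟨hBS.trans (by gcongr), hFS.trans (by gcongr)⟩,
    ⟨hSF.trans (le_mul_of_one_le_left' hK), hFS⟩, ⟨hSB.trans (le_mul_of_one_le_left' hK), hBS⟩⟩
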